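/- Let (𝒰₁,𝒱₁),(𝒰₂,𝒱₂) be a twin cotorsion pair on an exact category 𝓑 with enough projectives and injectives. If the heart 𝓗_t/𝒲_t of the twin cotorsion pair is zero, then 𝓗₁ ⊆ 𝒰₂ and 𝓗₂ ⊆ 𝒱₁, where 𝓗ᵢ is the heart subcategory of the single cotorsion pair (𝒰ᵢ,𝒱ᵢ). -/

import Mathlib

open CategoryTheory Limits ZeroObject

universe v u

variable (C : Type u) [Category.{v} C] [Preadditive C] [HasZeroObject C]
  [HasBinaryBiproducts C]

/-- An exact structure (in the sense of Quillen) on an additive category,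
given by a class of short exact sequences (conflations). -/
structure ExactStructure : Type (max u (v + 1)) where
  /-- the class of short exact sequences -/
  IsSES : ∀ {A B X : C}, (A ⟶ B) → (B ⟶ X) → Prop
  comp_zero : ∀ {A B X : C} {f : A ⟶ B} {g : B ⟶ X}, IsSES f g → f ≫ g = 0
  isKernel : ∀ {A B X : C} {f : A ⟶ B} {g : B ⟶ X} (h : IsSES f g),
      Nonempty (IsLimit (KernelFork.ofι f (comp_zero h)))
  isCokernel : ∀ {A B X : C} {f : A ⟶ B} {g : B ⟶ X} (h : IsSES f g),
      Nonempty (IsColimit (CokernelCofork.ofπ g (comp_zero h)))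
  ses_iso_congr : ∀ {A B X A' B' X' : C} {f : A ⟶ B} {g : B ⟶ X}
      (eA : A' ≅ A) (eB : B ≅ B') (eX : X ≅ X'), IsSES f g →
      IsSES (eA.hom ≫ f ≫ eB.hom) (eB.inv ≫ g ≫ eX.hom)
  id_ses : ∀ A : C, IsSES (𝟙 A) (0 : A ⟶ 0)
  id_ses' : ∀ A : C, IsSES (0 : (0 : C) ⟶ A) (𝟙 A)
  infl_comp : ∀ {A B X : C} (f : A ⟶ B) (f' : B ⟶ X),
      (∃ (Z : C) (g : B ⟶ Z), IsSES f g) → (∃ (Z : C) (g : X ⟶ Z), IsSES f' g) →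
      ∃ (Z : C) (g : X ⟶ Z), IsSES (f ≫ f') g
  defl_comp : ∀ {A B X : C} (g : A ⟶ B) (g' : B ⟶ X),
      (∃ (Z : C) (f : Z ⟶ A), IsSES f g) → (∃ (Z : C) (f : Z ⟶ B), IsSES f g') →
      ∃ (Z : C) (f : Z ⟶ A), IsSES f (g ≫ g')
  pushout_infl : ∀ {A B A' : C} (f : A ⟶ B) (a : A ⟶ A'),
      (∃ (Z : C) (g : B ⟶ Z), IsSES f g) →
      ∃ (P : C) (f' : A' ⟶ P) (b : B ⟶ P), IsPushout a f f' b ∧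
        ∃ (Z : C) (g : P ⟶ Z), IsSES f' g
  pullback_defl : ∀ {B X X' : C} (g : B ⟶ X) (x : X' ⟶ X),
      (∃ (Z : C) (f : Z ⟶ B), IsSES f g) →
      ∃ (P : C) (g' : P ⟶ X') (b : P ⟶ B), IsPullback g' b x g ∧
        ∃ (Z : C) (f : Z ⟶ P), IsSES f g'

variable {C}

namespace ExactStructure

variable (E : ExactStructure C)

/-- inflations (admissible monomorphisms) -/
def Infl {A B : C} (f : A ⟶ B) : Prop := ∃ (X : C) (g : B ⟶ X), E.IsSES f g

/-- deflations (admissible epimorphisms) -/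
def Defl {B X : C} (g : B ⟶ X) : Prop := ∃ (A : C) (f : A ⟶ B), E.IsSES f g

/-- projective objects relative to the exact structure -/
def Proj (P : C) : Prop :=
  ∀ ⦃B X : C⦄ (g : B ⟶ X), E.Defl g → ∀ h : P ⟶ X, ∃ l : P ⟶ B, l ≫ g = h

/-- injective objects relative to the exact structure -/
def Inj (I : C) : Prop :=
  ∀ ⦃A B : C⦄ (f : A ⟶ B), E.Infl f → ∀ h : A ⟶ I, ∃ l : B ⟶ I, f ≫ l = h

/-- the exact category has enough projectives -/
def EnoughProj : Prop :=
  ∀ X : C, ∃ (P K : C) (i : K ⟶ P) (p : P ⟶ X), E.Proj P ∧ E.IsSES i p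

/-- the exact category has enough injectives -/
def EnoughInj : Prop :=
  ∀ X : C, ∃ (I Z : C) (i : X ⟶ I) (p : I ⟶ Z), E.Inj I ∧ E.IsSES i p

end ExactStructure

/-- a morphism factors through an object of a given class of objects -/
def FactorsThru (S : Set C) {X Y : C} (f : X ⟶ Y) : Prop :=
  ∃ (W : C) (a : X ⟶ W) (b : W ⟶ Y), W ∈ S ∧ a ≫ b = f

/-- A cotorsion pair `(𝒰, 𝒱)` on the exact category `(C, E)`. -/
structure CotorsionPair (E : ExactStructure C) where
  U : Set C
  V : Set C
  U_summand : ∀ ⦃X Z : C⦄, Z ∈ U → (∃ (i : X ⟶ Z) (r : Z ⟶ X), i ≫ r = 𝟙 X) → X ∈ U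
  V_summand : ∀ ⦃X Z : C⦄, Z ∈ V → (∃ (i : X ⟶ Z) (r : Z ⟶ X), i ≫ r = 𝟙 X) → X ∈ V
  U_add : ∀ ⦃X Y : C⦄, X ∈ U → Y ∈ U → (X ⊞ Y) ∈ U
  V_add : ∀ ⦃X Y : C⦄, X ∈ V → Y ∈ V → (X ⊞ Y) ∈ V
  ext_vanish : ∀ ⦃A B X : C⦄ {f : A ⟶ B} {g : B ⟶ X}, E.IsSES f g → X ∈ U → A ∈ V →
      ∃ r : B ⟶ A, f ≫ r = 𝟙 A
  res : ∀ B : C, ∃ (VB UB : C) (i : VB ⟶ UB) (p : UB ⟶ B),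
      VB ∈ V ∧ UB ∈ U ∧ E.IsSES i p
  cores : ∀ B : C, ∃ (VB UB : C) (i : B ⟶ VB) (p : VB ⟶ UB),
      VB ∈ V ∧ UB ∈ U ∧ E.IsSES i p

namespace CotorsionPair

variable {E : ExactStructure C} (CP : CotorsionPair E)

/-- `𝒲 = 𝒰 ∩ 𝒱` -/
def W : Set C := CP.U ∩ CP.V

/-- `𝓑⁺`: objects admitting a short exact sequence `V ↣ W ↠ B` with `V ∈ 𝒱`, `W ∈ 𝒲`. -/
def Bplus : Set C :=
  {B | ∃ (V₀ W₀ : C) (i : V₀ ⟶ W₀) (p : W₀ ⟶ B), V₀ ∈ CP.V ∧ W₀ ∈ CP.W ∧ E.IsSES i p}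

/-- `𝓑⁻`: objects admitting a short exact sequence `B ↣ W ↠ U` with `W ∈ 𝒲`, `U ∈ 𝒰`. -/
def Bminus : Set C :=
  {B | ∃ (W₀ U₀ : C) (i : B ⟶ W₀) (p : W₀ ⟶ U₀), W₀ ∈ CP.W ∧ U₀ ∈ CP.U ∧ E.IsSES i p}

/-- the heart subcategory `𝓗 = 𝓑⁺ ∩ 𝓑⁻` -/
def Heart : Set C := CP.Bplus ∩ CP.Bminus

/-- the ideal relation defining the additive quotient `𝓑/𝒲` -/
def wRel : HomRel C := fun {X Y} f g =>
  ∃ (W : C) (a : X ⟶ W) (b : W ⟶ Y), W ∈ CP.W ∧ a ≫ b = f - g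

/-- the quotient category `𝓑/𝒲` -/
abbrev QW := CategoryTheory.Quotient CP.wRel

/-- the quotient functor `π : 𝓑 → 𝓑/𝒲` -/
abbrev qf : C ⥤ CP.QW := Quotient.functor _

/-- `𝓑⁺/𝒲` as a full subcategory of `𝓑/𝒲` -/
abbrev BplusCat := ObjectProperty.FullSubcategory (fun X : CP.QW => X.as ∈ CP.Bplus)

/-- `𝓑⁻/𝒲` as a full subcategory of `𝓑/𝒲` -/
abbrev BminusCat := ObjectProperty.FullSubcategory (fun X : CP.QW => X.as ∈ CP.Bminus)

/-- the heart `𝓗/𝒲` as a full subcategory of `𝓑/𝒲` -/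
abbrev HeartCat := ObjectProperty.FullSubcategory (fun X : CP.QW => X.as ∈ CP.Heart)

/-- the inclusion `𝓑⁺/𝒲 ↪ 𝓑/𝒲` -/
abbrev inclPlus : CP.BplusCat ⥤ CP.QW := ObjectProperty.ι _

/-- the inclusion `𝓑⁻/𝒲 ↪ 𝓑/𝒲` -/
abbrev inclMinus : CP.BminusCat ⥤ CP.QW := ObjectProperty.ι _

/-- the inclusion `𝓗/𝒲 ↪ 𝓑/𝒲` -/
abbrev inclHeart : CP.HeartCat ⥤ CP.QW := ObjectProperty.ι _

/-- `add(𝒰 ∗ 𝒱)`: objects `X` admitting a short exact sequence `U ↣ X ⊕ Y ↠ V`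
with `U ∈ 𝒰`, `V ∈ 𝒱`. -/
def addUV : Set C :=
  {X | ∃ (Y U₀ V₀ : C) (i : U₀ ⟶ X ⊞ Y) (p : X ⊞ Y ⟶ V₀),
    U₀ ∈ CP.U ∧ V₀ ∈ CP.V ∧ E.IsSES i p}

end CotorsionPair


variable (E : ExactStructure C)

/-- `𝒲_t = 𝒱₁ ∩ 𝒰₂` for a twin cotorsion pair -/
def Wt (CP₁ CP₂ : CotorsionPair E) : Set C := CP₁.V ∩ CP₂.U

/-- `𝓑_t⁺` for a twin cotorsion pair -/
def Btplus (CP₁ CP₂ : CotorsionPair E) : Set C :=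
  {B | ∃ (V₀ W₀ : C) (i : V₀ ⟶ W₀) (p : W₀ ⟶ B),
    V₀ ∈ CP₂.V ∧ W₀ ∈ Wt E CP₁ CP₂ ∧ E.IsSES i p}

/-- `𝓑_t⁻` for a twin cotorsion pair -/
def Btminus (CP₁ CP₂ : CotorsionPair E) : Set C :=
  {B | ∃ (W₀ U₀ : C) (i : B ⟶ W₀) (p : W₀ ⟶ U₀),
    W₀ ∈ Wt E CP₁ CP₂ ∧ U₀ ∈ CP₁.U ∧ E.IsSES i p}

/-- the heart `𝓗_t` of a twin cotorsion pair -/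
def Ht (CP₁ CP₂ : CotorsionPair E) : Set C := Btplus E CP₁ CP₂ ∩ Btminus E CP₁ CP₂

variable {E}

/-!
Let `B ↣ W ↠ U` with `W ∈ 𝒲_t`, `U ∈ 𝒰₁`. Resolve `B` by `V₂ ↣ U₂ ↠ B` with respect to
`(𝒰₂, 𝒱₂)` and embed `U₂ ↣ W' ↠ U'` with respect to `(𝒰₁, 𝒱₁)`; then `W' ∈ 𝒲_t`. The
cokernel `H` of the composite `V₂ ↣ W'` lies in `𝓑_t⁺`, and, as an extension of `B` by `U'`,
also in `𝓑_t⁻`. If `𝓗_t/𝒲_t = 0`, then `H` is a retract of an object of `𝒲_t ⊆ 𝒰₂`, so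
`V₂ ↣ W' ↠ H` splits, hence so does `V₂ ↣ U₂ ↠ B`, and `B ∈ 𝒰₂`. Since `𝓑₁⁻ ⊆ 𝓑_t⁻`, this
gives `𝓗₁ ⊆ 𝒰₂`; the inclusion `𝓗₂ ⊆ 𝒱₁` is dual.
-/

set_option linter.unusedSectionVars false

namespace ExactStructure.IsSES

variable {A B X A' X' P : C} {f : A ⟶ B} {g : B ⟶ X}

noncomputable def isColimit (h : E.IsSES f g) :
    IsColimit (CokernelCofork.ofπ g (E.comp_zero h)) :=
  (E.isCokernel h).some

noncomputable def isLimit (h : E.IsSES f g) : IsLimit (KernelFork.ofι f (E.comp_zero h)) :=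
  (E.isKernel h).some

lemma epi (h : E.IsSES f g) : Epi g :=
  ⟨fun _ _ hab => Cofork.IsColimit.hom_ext h.isColimit hab⟩

lemma mono (h : E.IsSES f g) : Mono f :=
  ⟨fun _ _ hab => Fork.IsLimit.hom_ext h.isLimit hab⟩

lemma comp_iso (h : E.IsSES f g) {B' : C} (e : B ≅ B') : E.IsSES (f ≫ e.hom) (e.inv ≫ g) := by
  simpa using E.ses_iso_congr (Iso.refl A) e (Iso.refl X) h

lemma of_isColimit (h : E.IsSES f g) {c : B ⟶ X'} (hc : f ≫ c = 0)
    (hcol : IsColimit (CokernelCofork.ofπ c hc)) : E.IsSES f c := by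
  have he : g ≫ (h.isColimit.coconePointUniqueUpToIso hcol).hom = c :=
    h.isColimit.comp_coconePointUniqueUpToIso_hom hcol WalkingParallelPair.one
  simpa [he] using E.ses_iso_congr (Iso.refl A) (Iso.refl B)
    (h.isColimit.coconePointUniqueUpToIso hcol) h

lemma of_isLimit (h : E.IsSES f g) {k : A' ⟶ B} (hk : k ≫ g = 0)
    (hlim : IsLimit (KernelFork.ofι k hk)) : E.IsSES k g := by
  have he : (h.isLimit.conePointUniqueUpToIso hlim).inv ≫ f = k :=
    hlim.conePointUniqueUpToIso_hom_comp h.isLimit WalkingParallelPair.zero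
  simpa [he] using E.ses_iso_congr (h.isLimit.conePointUniqueUpToIso hlim).symm (Iso.refl B)
    (Iso.refl X) h

lemma exists_section (h : E.IsSES f g) {r : B ⟶ A} (hr : f ≫ r = 𝟙 A) :
    ∃ s : X ⟶ B, s ≫ g = 𝟙 X := by
  obtain ⟨s, hs⟩ := CokernelCofork.IsColimit.desc' h.isColimit (𝟙 B - r ≫ f)
    (by simp [reassoc_of% hr])
  have := h.epi
  refine ⟨s, ?_⟩
  rw [← cancel_epi g, reassoc_of% (show g ≫ s = 𝟙 B - r ≫ f from hs)]
  simp [E.comp_zero h]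

lemma exists_retraction (h : E.IsSES f g) {s : X ⟶ B} (hs : s ≫ g = 𝟙 X) :
    ∃ r : B ⟶ A, f ≫ r = 𝟙 A := by
  obtain ⟨r, hr⟩ := KernelFork.IsLimit.lift' h.isLimit (𝟙 B - g ≫ s) (by simp [hs])
  have := h.mono
  refine ⟨r, ?_⟩
  rw [← cancel_mono f, Category.assoc, (show r ≫ f = 𝟙 B - g ≫ s from hr)]
  simp [reassoc_of% (E.comp_zero h)]

lemma of_isPushout (h : E.IsSES f g) {a : A ⟶ A'} {f' : A' ⟶ P} {b : B ⟶ P}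
    (hpo : IsPushout a f f' b) : ∃ g' : P ⟶ X, E.IsSES f' g' ∧ b ≫ g' = g := by
  obtain ⟨P₀, f₀, b₀, hpo₀, _, z, hz⟩ := E.pushout_infl f a ⟨X, g, h⟩
  have hf' : E.IsSES f' ((hpo₀.isoIsPushout _ _ hpo).inv ≫ z) := by
    simpa using hz.comp_iso (hpo₀.isoIsPushout _ _ hpo)
  let g' : P ⟶ X := hpo.desc 0 g (by simp [E.comp_zero h])
  have := h.epi
  have : Epi g' := epi_of_epi_fac (hpo.inr_desc _ _ _)
  refine ⟨g', hf'.of_isColimit (hpo.inl_desc _ _ _)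
    (CokernelCofork.IsColimit.ofπ' _ _ fun k hk => ?_), hpo.inr_desc _ _ _⟩
  obtain ⟨u, hu⟩ := CokernelCofork.IsColimit.desc' h.isColimit (b ≫ k)
    (by rw [← Category.assoc, ← hpo.w, Category.assoc, hk, Limits.comp_zero])
  exact ⟨u, hpo.hom_ext (by simp [g', hk]) (by simpa [g'] using hu)⟩

lemma of_isPullback (h : E.IsSES f g) {x : X' ⟶ X} {g' : P ⟶ X'} {b : P ⟶ B}
    (hpb : IsPullback g' b x g) : ∃ f' : A ⟶ P, E.IsSES f' g' ∧ f' ≫ b = f := by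
  obtain ⟨P₀, g₀, b₀, hpb₀, _, z, hz⟩ := E.pullback_defl g x ⟨A, f, h⟩
  have hg' : E.IsSES (z ≫ (hpb₀.isoIsPullback _ _ hpb).hom) g' := by
    simpa using hz.comp_iso (hpb₀.isoIsPullback _ _ hpb)
  let f' : A ⟶ P := hpb.lift 0 f (by simp [E.comp_zero h])
  have := h.mono
  have : Mono f' := mono_of_mono_fac (hpb.lift_snd _ _ _)
  refine ⟨f', hg'.of_isLimit (hpb.lift_fst _ _ _)
    (KernelFork.IsLimit.ofι' _ _ fun k hk => ?_), hpb.lift_snd _ _ _⟩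
  obtain ⟨u, hu⟩ := KernelFork.IsLimit.lift' h.isLimit (k ≫ b)
    (by rw [Category.assoc, ← hpb.w, ← Category.assoc, hk, zero_comp])
  exact ⟨u, hpb.hom_ext (by simp [f', hk]) (by simpa [f'] using hu)⟩

lemma third_iso_infl (h : E.IsSES f g) {B' : C} {i : B ⟶ B'} {p : B' ⟶ X'}
    (hip : E.IsSES i p) :
    ∃ (P : C) (e : B' ⟶ P) (j : X ⟶ P) (q : P ⟶ X'),
      E.IsSES (f ≫ i) e ∧ E.IsSES j q ∧ e ≫ q = p := by
  obtain ⟨P, j, e, hpo, -⟩ := E.pushout_infl i g ⟨X', p, hip⟩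
  obtain ⟨q, hjq, heq⟩ := hip.of_isPushout hpo
  obtain ⟨_, z, hz⟩ := E.infl_comp f i ⟨X, g, h⟩ ⟨X', p, hip⟩
  have := h.epi
  have := hpo.epi_inr_of_epi
  have hfe : (f ≫ i) ≫ e = 0 := by
    rw [Category.assoc, ← hpo.w, ← Category.assoc, E.comp_zero h, zero_comp]
  refine ⟨P, e, j, q, hz.of_isColimit hfe
    (CokernelCofork.IsColimit.ofπ' _ _ fun k hk => ?_), hjq, heq⟩
  obtain ⟨u, hu⟩ := CokernelCofork.IsColimit.desc' h.isColimit (i ≫ k)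
    (by simpa using hk)
  exact ⟨hpo.desc u k hu, hpo.inr_desc _ _ _⟩

lemma third_iso_defl (h : E.IsSES f g) {A'' : C} {i : A'' ⟶ X} {p : X ⟶ X'}
    (hip : E.IsSES i p) :
    ∃ (T : C) (k : T ⟶ B) (j : A ⟶ T) (q : T ⟶ A''),
      E.IsSES k (g ≫ p) ∧ E.IsSES j q ∧ j ≫ k = f := by
  obtain ⟨T, q, k, hpb, -⟩ := E.pullback_defl g i ⟨A, f, h⟩
  obtain ⟨j, hjq, hjk⟩ := h.of_isPullback hpb
  obtain ⟨_, z, hz⟩ := E.defl_comp g p ⟨A, f, h⟩ ⟨A'', i, hip⟩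
  have := hip.mono
  have := hpb.mono_snd_of_mono
  have hkp : k ≫ g ≫ p = 0 := by
    rw [← Category.assoc, ← hpb.w, Category.assoc, E.comp_zero hip, Limits.comp_zero]
  refine ⟨T, k, j, q, hz.of_isLimit hkp
    (KernelFork.IsLimit.ofι' _ _ fun l hl => ?_), hjq, hjk⟩
  obtain ⟨u, hu⟩ := KernelFork.IsLimit.lift' hip.isLimit (l ≫ g)
    (by simpa using hl)
  exact ⟨hpb.lift u l hu, hpb.lift_snd _ _ _⟩

end ExactStructure.IsSES

namespace CotorsionPair

variable (CP : CotorsionPair E) {A B X : C} {f : A ⟶ B} {g : B ⟶ X}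

lemma mem_U_of_retraction (h : E.IsSES f g) (hB : B ∈ CP.U) {r : B ⟶ A} (hr : f ≫ r = 𝟙 A) :
    X ∈ CP.U :=
  let ⟨s, hs⟩ := h.exists_section hr
  CP.U_summand hB ⟨s, g, hs⟩

lemma mem_V_of_section (h : E.IsSES f g) (hB : B ∈ CP.V) {s : X ⟶ B} (hs : s ≫ g = 𝟙 X) :
    A ∈ CP.V :=
  let ⟨r, hr⟩ := h.exists_retraction hs
  CP.V_summand hB ⟨f, r, hr⟩

/- The resolution `V ↣ Y ↠ B` splits: its pullback to `A` splits, and pushing out along that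
splitting yields a conflation `V ↣ Q ↠ X`, which splits as well. -/
lemma mem_U_of_extension (h : E.IsSES f g) (hA : A ∈ CP.U) (hX : X ∈ CP.U) : B ∈ CP.U := by
  obtain ⟨V, Y, i, p, hV, hY, hip⟩ := CP.res B
  obtain ⟨T, k, j, q, hk, hjq, hjk⟩ := hip.third_iso_defl h
  obtain ⟨ρ, hρ⟩ := CP.ext_vanish hjq hA hV
  obtain ⟨Q, k', b, hpo, -⟩ := E.pushout_infl k ρ ⟨X, _, hk⟩
  obtain ⟨q', hq', -⟩ := hk.of_isPushout hpo
  obtain ⟨ρ', hρ'⟩ := CP.ext_vanish hq' hX hV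
  refine CP.mem_U_of_retraction hip hY (r := b ≫ ρ') ?_
  rw [← hjk, Category.assoc, ← Category.assoc k, ← hpo.w, Category.assoc, hρ',
    Category.comp_id, hρ]

lemma mem_V_of_extension (h : E.IsSES f g) (hA : A ∈ CP.V) (hX : X ∈ CP.V) : B ∈ CP.V := by
  obtain ⟨Y, U, i, p, hY, hU, hip⟩ := CP.cores B
  obtain ⟨Q, e, j, q, he, hjq, heq⟩ := h.third_iso_infl hip
  obtain ⟨ρ, hρ⟩ := CP.ext_vanish hjq hU hX
  obtain ⟨σ, hσ⟩ := hjq.exists_section hρ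
  obtain ⟨R, q', b, hpb, -⟩ := E.pullback_defl e σ ⟨A, _, he⟩
  obtain ⟨j', hj', -⟩ := he.of_isPullback hpb
  obtain ⟨ρ', hρ'⟩ := CP.ext_vanish hj' hU hA
  obtain ⟨τ, hτ⟩ := hj'.exists_section hρ'
  refine CP.mem_V_of_section hip hY (s := τ ≫ b) ?_
  rw [← heq, Category.assoc, ← Category.assoc b, ← hpb.w, Category.assoc, hσ,
    Category.comp_id, hτ]

lemma V_subset_of_U_subset {P Q : CotorsionPair E} (hPQ : P.U ⊆ Q.U) : Q.V ⊆ P.V :=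
  fun V hV => by
    obtain ⟨Y, U, i, p, hY, hU, hip⟩ := P.cores V
    obtain ⟨r, hr⟩ := Q.ext_vanish hip (hPQ hU) hV
    exact P.V_summand hY ⟨i, r, hr⟩

end CotorsionPair

section TwinCotorsionPair

variable {CP₁ CP₂ : CotorsionPair E} {B B' U V : C}

lemma Bminus_subset_Btminus (htwin : CP₁.U ⊆ CP₂.U) : CP₁.Bminus ⊆ Btminus E CP₁ CP₂ :=
  fun _ ⟨W, U, i, p, hW, hU, hip⟩ => ⟨W, U, i, p, ⟨hW.2, htwin hW.1⟩, hU, hip⟩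

lemma Bplus_subset_Btplus (htwin : CP₁.U ⊆ CP₂.U) : CP₂.Bplus ⊆ Btplus E CP₁ CP₂ :=
  fun _ ⟨V, W, i, p, hV, hW, hip⟩ =>
    ⟨V, W, i, p, hV, ⟨CotorsionPair.V_subset_of_U_subset htwin hW.2, hW.1⟩, hip⟩

/- The pushout `D` of `B ↣ W` and `B ↣ B'` is an extension of `W` by `U`, hence in `𝒰₂`; embedding
it into its `(𝒰₁, 𝒱₁)`-coresolution gives `B' ↣ V₁ ↠ P` with `V₁ ∈ 𝒲_t` and `P ∈ 𝒰₁`. -/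
lemma mem_Btminus_of_isSES (htwin : CP₁.U ⊆ CP₂.U) (hB : B ∈ Btminus E CP₁ CP₂)
    {j : B ⟶ B'} {c : B' ⟶ U} (hjc : E.IsSES j c) (hU : U ∈ CP₁.U) :
    B' ∈ Btminus E CP₁ CP₂ := by
  obtain ⟨W, U₀, i, p, hW, hU₀, hip⟩ := hB
  obtain ⟨D, j', i', hpo, -⟩ := E.pushout_infl i j ⟨U₀, p, hip⟩
  obtain ⟨p', hj'p', -⟩ := hip.of_isPushout hpo
  obtain ⟨c', hi'c', -⟩ := hjc.of_isPushout hpo.flip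
  have hD : D ∈ CP₂.U := CP₂.mem_U_of_extension hi'c' hW.2 (htwin hU)
  obtain ⟨V₁, U₁, m, n, hV₁, hU₁, hmn⟩ := CP₁.cores D
  have hV₁W : V₁ ∈ Wt E CP₁ CP₂ := ⟨hV₁, CP₂.mem_U_of_extension hmn hD (htwin hU₁)⟩
  obtain ⟨P, e, _, _, he, hP, -⟩ := hj'p'.third_iso_infl hmn
  exact ⟨V₁, P, j' ≫ m, e, hV₁W, CP₁.mem_U_of_extension hP hU₀ hU₁, he⟩

lemma mem_Btplus_of_isSES (htwin : CP₁.U ⊆ CP₂.U) (hB : B ∈ Btplus E CP₁ CP₂)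
    {k : V ⟶ B'} {b : B' ⟶ B} (hkb : E.IsSES k b) (hV : V ∈ CP₂.V) :
    B' ∈ Btplus E CP₁ CP₂ := by
  have hV₂V₁ := CotorsionPair.V_subset_of_U_subset htwin
  obtain ⟨V₀, W, i, p, hV₀, hW, hip⟩ := hB
  obtain ⟨D, b', p', hpb, -⟩ := E.pullback_defl p b ⟨V₀, i, hip⟩
  obtain ⟨i', hi'b', -⟩ := hip.of_isPullback hpb
  obtain ⟨k', hk'p', -⟩ := hkb.of_isPullback hpb.flip
  have hD : D ∈ CP₁.V := CP₁.mem_V_of_extension hk'p' (hV₂V₁ hV) hW.1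
  obtain ⟨V₂, U₂, m, n, hV₂, hU₂, hmn⟩ := CP₂.res D
  have hU₂W : U₂ ∈ Wt E CP₁ CP₂ := ⟨CP₁.mem_V_of_extension hmn (hV₂V₁ hV₂) hD, hU₂⟩
  obtain ⟨T, t, _, _, ht, hT, -⟩ := hmn.third_iso_defl hi'b'
  exact ⟨T, U₂, t, n ≫ b', CP₂.mem_V_of_extension hT hV₂ hV₀, hU₂W, ht⟩

lemma Btminus_subset_U (htwin : CP₁.U ⊆ CP₂.U)
    (hzero : ∀ X ∈ Ht E CP₁ CP₂, FactorsThru (Wt E CP₁ CP₂) (𝟙 X)) :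
    Btminus E CP₁ CP₂ ⊆ CP₂.U := by
  intro B hB
  obtain ⟨V, Y, v, p, hV, hY, hvp⟩ := CP₂.res B
  obtain ⟨W, U, m, n, hW, hU, hmn⟩ := CP₁.cores Y
  obtain ⟨H, e, j, c, he, hjc, -⟩ := hvp.third_iso_infl hmn
  have hWt : W ∈ Wt E CP₁ CP₂ := ⟨hW, CP₂.mem_U_of_extension hmn hY (htwin hU)⟩
  have hH : H ∈ Ht E CP₁ CP₂ :=
    ⟨⟨V, W, v ≫ m, e, hV, hWt, he⟩, mem_Btminus_of_isSES htwin hB hjc hU⟩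
  obtain ⟨W₀, a, b, hW₀, hab⟩ := hzero H hH
  obtain ⟨ρ, hρ⟩ := CP₂.ext_vanish he (CP₂.U_summand hW₀.2 ⟨a, b, hab⟩) hV
  exact CP₂.mem_U_of_retraction hvp hY (r := m ≫ ρ) (by simpa using hρ)

lemma Btplus_subset_V (htwin : CP₁.U ⊆ CP₂.U)
    (hzero : ∀ X ∈ Ht E CP₁ CP₂, FactorsThru (Wt E CP₁ CP₂) (𝟙 X)) :
    Btplus E CP₁ CP₂ ⊆ CP₁.V := by
  intro B hB
  obtain ⟨Y, U, v, p, hY, hU, hvp⟩ := CP₁.cores B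
  obtain ⟨V, W, m, n, hV, hW, hmn⟩ := CP₂.res Y
  obtain ⟨H, k, j, c, hk, hjc, -⟩ := hmn.third_iso_defl hvp
  have hWt : W ∈ Wt E CP₁ CP₂ :=
    ⟨CP₁.mem_V_of_extension hmn (CotorsionPair.V_subset_of_U_subset htwin hV) hY, hW⟩
  have hH : H ∈ Ht E CP₁ CP₂ :=
    ⟨mem_Btplus_of_isSES htwin hB hjc hV, ⟨W, U, k, n ≫ p, hWt, hU, hk⟩⟩
  obtain ⟨W₀, a, b, hW₀, hab⟩ := hzero H hH
  obtain ⟨ρ, hρ⟩ := CP₁.ext_vanish hk hU (CP₁.V_summand hW₀.1 ⟨a, b, hab⟩)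
  obtain ⟨s, hs⟩ := hk.exists_section hρ
  exact CP₁.mem_V_of_section hvp hY (s := s ≫ n) (by simpa using hs)

end TwinCotorsionPair

theorem stmt19_general (CP₁ CP₂ : CotorsionPair E) (htwin : CP₁.U ⊆ CP₂.U)
    (hzero : ∀ X ∈ Ht E CP₁ CP₂, FactorsThru (Wt E CP₁ CP₂) (𝟙 X)) :
    CP₁.Heart ⊆ CP₂.U ∧ CP₂.Heart ⊆ CP₁.V :=
  ⟨fun _ hB => Btminus_subset_U htwin hzero (Bminus_subset_Btminus htwin hB.2),
    fun _ hB => Btplus_subset_V htwin hzero (Bplus_subset_Btplus htwin hB.1)⟩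

/-- if the heart `𝓗_t/𝒲_t` of a twin cotorsion pair is zero (every object
of `𝓗_t` becomes zero in `𝓑/𝒲_t`), then `𝓗₁ ⊆ 𝒰₂` and `𝓗₂ ⊆ 𝒱₁`. -/
theorem stmt19 (CP₁ CP₂ : CotorsionPair E) (htwin : CP₁.U ⊆ CP₂.U)
    (hEP : E.EnoughProj) (hEI : E.EnoughInj)
    (hzero : ∀ X ∈ Ht E CP₁ CP₂, FactorsThru (Wt E CP₁ CP₂) (𝟙 X)) :
    CP₁.Heart ⊆ CP₂.U ∧ CP₂.Heart ⊆ CP₁.V :=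
  stmt19_general CP₁ CP₂ htwin hzero
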